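/- arXiv:2510.07851 — 2 statements merged into one kernel-verified Lean document; each statement's English description precedes it below -/
import Mathlib

section
/- Reduction → on FMC terms is confluent: if M →* N and M →* P, then there exists a term Q such that N →* Q and P →* Q. -/
variable {Loc Ch : Type}

/-- FMC terms: variable, push `[N]a.M`, pop `a<x>.M` (de Bruijn binder),
choice `i`, case `M ; i -> N`, and loop `M^i`. -/
inductive Tm (Loc Ch : Type) : Type where
  | var : ℕ → Tm Loc Ch
  | push : Tm Loc Ch → Loc → Tm Loc Ch → Tm Loc Ch
  | pop : Loc → Tm Loc Ch → Tm Loc Ch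
  | choice : Ch → Tm Loc Ch
  | caseOf : Tm Loc Ch → Ch → Tm Loc Ch → Tm Loc Ch
  | loop : Tm Loc Ch → Ch → Tm Loc Ch

namespace Tm

/-- Shift the free de Bruijn indices `≥ d` up by one. -/
def lift : Tm Loc Ch → ℕ → Tm Loc Ch
  | var n, d => if n < d then var n else var (n + 1)
  | push N a M, d => push (N.lift d) a (M.lift d)
  | pop a M, d => pop a (M.lift (d + 1))
  | choice i, _ => choice i
  | caseOf M i N, d => caseOf (M.lift d) i (N.lift d)
  | loop M i, d => loop (M.lift d) i

/-- Capture-avoiding substitution `{N/k}M` for the de Bruijn index `k`. -/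
def subst : Tm Loc Ch → ℕ → Tm Loc Ch → Tm Loc Ch
  | var n, k, N => if n = k then N else if n < k then var n else var (n - 1)
  | push P a M, k, N => push (P.subst k N) a (M.subst k N)
  | pop a M, k, N => pop a (M.subst (k + 1) (N.lift 0))
  | choice i, _, _ => choice i
  | caseOf M i P, k, N => caseOf (M.subst k N) i (P.subst k N)
  | loop M i, k, N => loop (M.subst k N) i

end Tm

/-- Reduction: the closure under arbitrary contexts of the rules
beta, passage, select, reject, prefix(pop), prefix(push), associate, unroll. -/
inductive Step : Tm Loc Ch → Tm Loc Ch → Prop where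
  | beta (N : Tm Loc Ch) (a : Loc) (M : Tm Loc Ch) :
      Step (.push N a (.pop a M)) (M.subst 0 N)
  | passage (N : Tm Loc Ch) (a b : Loc) (M : Tm Loc Ch) (h : a ≠ b) :
      Step (.push N b (.pop a M)) (.pop a (.push (N.lift 0) b M))
  | select (i : Ch) (M : Tm Loc Ch) :
      Step (.caseOf (.choice i) i M) M
  | reject (i j : Ch) (M : Tm Loc Ch) (h : i ≠ j) :
      Step (.caseOf (.choice i) j M) (.choice i)
  | prefixPop (a : Loc) (N : Tm Loc Ch) (i : Ch) (M : Tm Loc Ch) :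
      Step (.caseOf (.pop a N) i M) (.pop a (.caseOf N i (M.lift 0)))
  | prefixPush (P : Tm Loc Ch) (a : Loc) (N : Tm Loc Ch) (i : Ch) (M : Tm Loc Ch) :
      Step (.caseOf (.push P a N) i M) (.push P a (.caseOf N i M))
  | assoc (P : Tm Loc Ch) (i : Ch) (N M : Tm Loc Ch) :
      Step (.caseOf (.caseOf P i N) i M) (.caseOf P i (.caseOf N i M))
  | unroll (M : Tm Loc Ch) (i : Ch) :
      Step (.loop M i) (.caseOf M i (.loop M i))
  | push_left (N N' : Tm Loc Ch) (a : Loc) (M : Tm Loc Ch) :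
      Step N N' → Step (.push N a M) (.push N' a M)
  | push_right (N : Tm Loc Ch) (a : Loc) (M M' : Tm Loc Ch) :
      Step M M' → Step (.push N a M) (.push N a M')
  | pop_body (a : Loc) (M M' : Tm Loc Ch) :
      Step M M' → Step (.pop a M) (.pop a M')
  | case_left (M M' : Tm Loc Ch) (i : Ch) (N : Tm Loc Ch) :
      Step M M' → Step (.caseOf M i N) (.caseOf M' i N)
  | case_right (M : Tm Loc Ch) (i : Ch) (N N' : Tm Loc Ch) :
      Step N N' → Step (.caseOf M i N) (.caseOf M i N')
  | loop_body (M M' : Tm Loc Ch) (i : Ch) :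
      Step M M' → Step (.loop M i) (.loop M' i)


/-!
The structural rules (passage, select, reject, the two prefix rules and associate) only rearrange
a term: they reach a normal form `snf M` that every structural step preserves. Beta and unroll are
handled by parallel reduction `⇒`, and the key fact is that structural normalisation commutes with
`⇒` up to normal forms: if `M ⇒ N` then `snf M ⇒ W` for some `W` with `snf W = snf N`. Hence the
relation "`N = snf W` for some `M ⇒ W`" has the diamond property (close both sides with the
complete development of `M`), every reduction `M →* N` projects to a chain of it from `snf M` to
`snf N`, and it is contained in `→*`. Confluence follows from the Church–Rosser lemma for this
relation, since `N →* snf N`.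
-/

open Relation

namespace Tm

theorem lift_lift_of_le (M : Tm Loc Ch) {d e : ℕ} (h : d ≤ e) :
    (M.lift d).lift (e + 1) = (M.lift e).lift d := by
  induction M generalizing d e with
  | var n => grind [lift]
  | pop a M ih => simp only [lift, ih (Nat.succ_le_succ h)]
  | _ => simp_all [lift]

theorem lift_subst_of_le (M N : Tm Loc Ch) {d k : ℕ} (h : d ≤ k) :
    (M.subst k N).lift d = (M.lift d).subst (k + 1) (N.lift d) := by
  induction M generalizing N d k with
  | var n => grind [lift, subst]
  | pop a M ih =>
    simp only [subst, lift, ih _ (Nat.succ_le_succ h), lift_lift_of_le N (Nat.zero_le d)]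
  | _ => simp_all [subst, lift]

theorem lift_subst_of_ge (M N : Tm Loc Ch) {k d : ℕ} (h : k ≤ d) :
    (M.subst k N).lift d = (M.lift (d + 1)).subst k (N.lift d) := by
  induction M generalizing N d k with
  | var n => grind [lift, subst]
  | pop a M ih =>
    simp only [subst, lift, ih _ (Nat.succ_le_succ h), lift_lift_of_le N (Nat.zero_le d)]
  | _ => simp_all [subst, lift]

@[simp]
theorem subst_lift (M N : Tm Loc Ch) (d : ℕ) : (M.lift d).subst d N = M := by
  induction M generalizing N d with
  | var n => grind [lift, subst]
  | _ => simp_all [subst, lift]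

theorem subst_subst_of_le (M N P : Tm Loc Ch) {k j : ℕ} (h : k ≤ j) :
    (M.subst k N).subst j P = (M.subst (j + 1) (P.lift k)).subst k (N.subst j P) := by
  induction M generalizing N P k j with
  | var n => grind [subst, subst_lift]
  | pop a M ih =>
    simp only [subst, ih _ _ (Nat.succ_le_succ h), lift_lift_of_le P (Nat.zero_le k),
      lift_subst_of_le N P (Nat.zero_le j)]
  | _ => simp_all [subst]

end Tm

inductive StructStep : Tm Loc Ch → Tm Loc Ch → Prop where
  | passage (N : Tm Loc Ch) (a b : Loc) (M : Tm Loc Ch) (h : a ≠ b) :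
      StructStep (.push N b (.pop a M)) (.pop a (.push (N.lift 0) b M))
  | select (i : Ch) (M : Tm Loc Ch) :
      StructStep (.caseOf (.choice i) i M) M
  | reject (i j : Ch) (M : Tm Loc Ch) (h : i ≠ j) :
      StructStep (.caseOf (.choice i) j M) (.choice i)
  | prefixPop (a : Loc) (N : Tm Loc Ch) (i : Ch) (M : Tm Loc Ch) :
      StructStep (.caseOf (.pop a N) i M) (.pop a (.caseOf N i (M.lift 0)))
  | prefixPush (P : Tm Loc Ch) (a : Loc) (N : Tm Loc Ch) (i : Ch) (M : Tm Loc Ch) :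
      StructStep (.caseOf (.push P a N) i M) (.push P a (.caseOf N i M))
  | assoc (P : Tm Loc Ch) (i : Ch) (N M : Tm Loc Ch) :
      StructStep (.caseOf (.caseOf P i N) i M) (.caseOf P i (.caseOf N i M))
  | push_left (N N' : Tm Loc Ch) (a : Loc) (M : Tm Loc Ch) :
      StructStep N N' → StructStep (.push N a M) (.push N' a M)
  | push_right (N : Tm Loc Ch) (a : Loc) (M M' : Tm Loc Ch) :
      StructStep M M' → StructStep (.push N a M) (.push N a M')
  | pop_body (a : Loc) (M M' : Tm Loc Ch) :
      StructStep M M' → StructStep (.pop a M) (.pop a M')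
  | case_left (M M' : Tm Loc Ch) (i : Ch) (N : Tm Loc Ch) :
      StructStep M M' → StructStep (.caseOf M i N) (.caseOf M' i N)
  | case_right (M : Tm Loc Ch) (i : Ch) (N N' : Tm Loc Ch) :
      StructStep N N' → StructStep (.caseOf M i N) (.caseOf M i N')
  | loop_body (M M' : Tm Loc Ch) (i : Ch) :
      StructStep M M' → StructStep (.loop M i) (.loop M' i)

namespace StructStep

theorem step {M N : Tm Loc Ch} (h : StructStep M N) : Step M N := by
  induction h <;> constructor <;> assumption

theorem lift {M M' : Tm Loc Ch} (h : StructStep M M') (d : ℕ) :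
    StructStep (M.lift d) (M'.lift d) := by
  induction h generalizing d with
  | passage N a b M h =>
    simp only [Tm.lift, Tm.lift_lift_of_le N (Nat.zero_le d)]
    exact .passage _ a b _ h
  | prefixPop a N i M =>
    simp only [Tm.lift, Tm.lift_lift_of_le M (Nat.zero_le d)]
    exact .prefixPop a _ i _
  | _ => simp only [Tm.lift]; constructor <;> solve_by_elim

theorem subst {M M' : Tm Loc Ch} (h : StructStep M M') (k : ℕ) (N : Tm Loc Ch) :
    StructStep (M.subst k N) (M'.subst k N) := by
  induction h generalizing k N with
  | passage P a b M h =>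
    simp only [Tm.subst, ← Tm.lift_subst_of_le P N (Nat.zero_le k)]
    exact .passage _ a b _ h
  | prefixPop a P i M =>
    simp only [Tm.subst, ← Tm.lift_subst_of_le M N (Nat.zero_le k)]
    exact .prefixPop a _ i _
  | _ => simp only [Tm.subst]; constructor <;> solve_by_elim

end StructStep

section Congruence

variable {M M' N N' : Tm Loc Ch}

theorem structRed_push (a : Loc) (hN : ReflTransGen StructStep N N')
    (hM : ReflTransGen StructStep M M') :
    ReflTransGen StructStep (.push N a M) (.push N' a M') :=
  (ReflTransGen.lift (Tm.push · a M) (fun _ _ h ↦ .push_left _ _ a M h) _ _ hN).trans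
    (ReflTransGen.lift (Tm.push N' a ·) (fun _ _ h ↦ .push_right N' a _ _ h) _ _ hM)

theorem structRed_pop (a : Loc) (hM : ReflTransGen StructStep M M') :
    ReflTransGen StructStep (.pop a M) (.pop a M') :=
  ReflTransGen.lift (Tm.pop a ·) (fun _ _ h ↦ .pop_body a _ _ h) _ _ hM

theorem structRed_caseOf (i : Ch) (hM : ReflTransGen StructStep M M')
    (hN : ReflTransGen StructStep N N') :
    ReflTransGen StructStep (.caseOf M i N) (.caseOf M' i N') :=
  (ReflTransGen.lift (Tm.caseOf · i N) (fun _ _ h ↦ .case_left _ _ i N h) _ _ hM).trans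
    (ReflTransGen.lift (Tm.caseOf M' i ·) (fun _ _ h ↦ .case_right M' i _ _ h) _ _ hN)

theorem structRed_loop (i : Ch) (hM : ReflTransGen StructStep M M') :
    ReflTransGen StructStep (.loop M i) (.loop M' i) :=
  ReflTransGen.lift (Tm.loop · i) (fun _ _ h ↦ .loop_body _ _ i h) _ _ hM

theorem red_push (a : Loc) (hN : ReflTransGen Step N N') (hM : ReflTransGen Step M M') :
    ReflTransGen Step (.push N a M) (.push N' a M') :=
  (ReflTransGen.lift (Tm.push · a M) (fun _ _ h ↦ .push_left _ _ a M h) _ _ hN).trans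
    (ReflTransGen.lift (Tm.push N' a ·) (fun _ _ h ↦ .push_right N' a _ _ h) _ _ hM)

theorem red_pop (a : Loc) (hM : ReflTransGen Step M M') :
    ReflTransGen Step (.pop a M) (.pop a M') :=
  ReflTransGen.lift (Tm.pop a ·) (fun _ _ h ↦ .pop_body a _ _ h) _ _ hM

theorem red_caseOf (i : Ch) (hM : ReflTransGen Step M M') (hN : ReflTransGen Step N N') :
    ReflTransGen Step (.caseOf M i N) (.caseOf M' i N') :=
  (ReflTransGen.lift (Tm.caseOf · i N) (fun _ _ h ↦ .case_left _ _ i N h) _ _ hM).trans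
    (ReflTransGen.lift (Tm.caseOf M' i ·) (fun _ _ h ↦ .case_right M' i _ _ h) _ _ hN)

theorem red_loop (i : Ch) (hM : ReflTransGen Step M M') :
    ReflTransGen Step (.loop M i) (.loop M' i) :=
  ReflTransGen.lift (Tm.loop · i) (fun _ _ h ↦ .loop_body _ _ i h) _ _ hM

theorem red_of_structRed (h : ReflTransGen StructStep M M') : ReflTransGen Step M M' :=
  ReflTransGen.mono (fun _ _ hs ↦ hs.step) _ _ h

theorem structRed_lift (h : ReflTransGen StructStep M M') (d : ℕ) :
    ReflTransGen StructStep (M.lift d) (M'.lift d) :=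
  ReflTransGen.lift (Tm.lift · d) (fun _ _ hs ↦ hs.lift d) _ _ h

theorem structRed_subst_left (h : ReflTransGen StructStep M M') (k : ℕ) (N : Tm Loc Ch) :
    ReflTransGen StructStep (M.subst k N) (M'.subst k N) :=
  ReflTransGen.lift (Tm.subst · k N) (fun _ _ hs ↦ hs.subst k N) _ _ h

theorem structRed_subst_right (M : Tm Loc Ch) (k : ℕ) (h : ReflTransGen StructStep N N') :
    ReflTransGen StructStep (M.subst k N) (M.subst k N') := by
  induction M generalizing k N N' with
  | var n =>
    simp only [Tm.subst]
    split_ifs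
    exacts [h, .refl, .refl]
  | push P a M ihP ihM => exact structRed_push a (ihP k h) (ihM k h)
  | pop a M ih => exact structRed_pop a (ih (k + 1) (structRed_lift h 0))
  | choice i => exact .refl
  | caseOf M i P ihM ihP => exact structRed_caseOf i (ihM k h) (ihP k h)
  | loop M i ih => exact structRed_loop i (ih k h)

end Congruence

namespace Tm

/- `pushNF N a M` and `caseNF M i N` are the structural normal forms of `[N]a.M` and
`M ; i -> N` for `M` in normal form: the push passes the pops at other locations, the case
passes the prefixes of `M`. -/
open Classical in
noncomputable def pushNF (N : Tm Loc Ch) (a : Loc) : Tm Loc Ch → Tm Loc Ch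
  | .pop b M => if a = b then .push N a (.pop b M) else .pop b (pushNF (N.lift 0) a M)
  | M => .push N a M

open Classical in
noncomputable def caseNF : Tm Loc Ch → Ch → Tm Loc Ch → Tm Loc Ch
  | .choice j, i, N => if j = i then N else .choice j
  | .pop b M, i, N => .pop b (caseNF M i (N.lift 0))
  | .push P a M, i, N => pushNF P a (caseNF M i N)
  | .caseOf P j M, i, N =>
    if j = i then .caseOf P i (caseNF M i N) else .caseOf (.caseOf P j M) i N
  | M, i, N => .caseOf M i N

noncomputable def snf : Tm Loc Ch → Tm Loc Ch
  | .push N a M => pushNF N.snf a M.snf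
  | .pop a M => .pop a M.snf
  | .caseOf M i N => caseNF M.snf i N.snf
  | .loop M i => .loop M.snf i
  | M => M

theorem lift_pushNF (N : Tm Loc Ch) (a : Loc) (M : Tm Loc Ch) (d : ℕ) :
    (pushNF N a M).lift d = pushNF (N.lift d) a (M.lift d) := by
  induction M generalizing N d with
  | pop b M ih =>
    by_cases hab : a = b
    · simp [pushNF, lift, hab]
    · simp only [pushNF, lift, if_neg hab, ih, lift_lift_of_le N (Nat.zero_le d)]
  | var n => simp only [pushNF, lift]; split_ifs <;> simp only [pushNF]
  | _ => simp only [pushNF, lift]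

theorem lift_caseNF (M : Tm Loc Ch) (i : Ch) (N : Tm Loc Ch) (d : ℕ) :
    (caseNF M i N).lift d = caseNF (M.lift d) i (N.lift d) := by
  induction M generalizing N d with
  | choice j => by_cases hji : j = i <;> simp [caseNF, lift, hji]
  | pop b M ih => simp only [caseNF, lift, ih, lift_lift_of_le N (Nat.zero_le d)]
  | push P c M _ ih => simp only [caseNF, lift, lift_pushNF, ih]
  | caseOf P j M _ ih => by_cases hji : j = i <;> simp [caseNF, lift, hji, ih]
  | var n => simp only [caseNF, lift]; split_ifs <;> simp only [caseNF]
  | loop => simp only [caseNF, lift]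

theorem snf_lift (M : Tm Loc Ch) (d : ℕ) : (M.lift d).snf = M.snf.lift d := by
  induction M generalizing d with
  | var n => simp only [snf, lift]; split_ifs <;> rfl
  | _ => simp_all [snf, lift, lift_pushNF, lift_caseNF]

theorem caseNF_pushNF (N : Tm Loc Ch) (a : Loc) (M : Tm Loc Ch) (i : Ch) (K : Tm Loc Ch) :
    caseNF (pushNF N a M) i K = pushNF N a (caseNF M i K) := by
  induction M generalizing N K with
  | pop b M ih =>
    by_cases hab : a = b
    · simp only [pushNF, if_pos hab, caseNF]
    · simp only [pushNF, if_neg hab, caseNF, ih]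
  | _ => simp only [pushNF, caseNF]

theorem caseNF_caseNF (M : Tm Loc Ch) (i : Ch) (N K : Tm Loc Ch) :
    caseNF (caseNF M i N) i K = caseNF M i (caseNF N i K) := by
  induction M generalizing N K with
  | choice j => by_cases hji : j = i <;> simp [caseNF, hji]
  | pop b M ih => simp only [caseNF, ih, lift_caseNF]
  | push P c M _ ih => simp only [caseNF, caseNF_pushNF, ih]
  | caseOf P j M _ ih => by_cases hji : j = i <;> simp [caseNF, hji, ih]
  | _ => simp [caseNF]

end Tm

open Tm

theorem structRed_pushNF (N : Tm Loc Ch) (a : Loc) (M : Tm Loc Ch) :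
    ReflTransGen StructStep (.push N a M) (pushNF N a M) := by
  induction M generalizing N with
  | pop b M ih =>
    by_cases hab : a = b
    · simp only [pushNF, if_pos hab]; exact .refl
    · simp only [pushNF, if_neg hab]
      exact .head (.passage N b a M (Ne.symm hab)) (structRed_pop b (ih _))
  | _ => simp only [pushNF]; exact .refl

theorem structRed_caseNF (M : Tm Loc Ch) (i : Ch) (N : Tm Loc Ch) :
    ReflTransGen StructStep (.caseOf M i N) (caseNF M i N) := by
  induction M generalizing N with
  | choice j =>
    by_cases hji : j = i
    · simp only [caseNF, hji]; exact .single (.select i N)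
    · simp only [caseNF, if_neg hji]; exact .single (.reject j i N hji)
  | pop b M ih => exact .head (.prefixPop b M i N) (structRed_pop b (ih _))
  | push P a M _ ih =>
    exact .head (.prefixPush P a M i N)
      ((structRed_push a .refl (ih N)).trans (structRed_pushNF P a _))
  | caseOf P j M _ ih =>
    by_cases hji : j = i
    · subst hji; simp only [caseNF]
      exact .head (.assoc P j M N) (structRed_caseOf j .refl (ih N))
    · simp only [caseNF, if_neg hji]; exact .refl
  | _ => simp only [caseNF]; exact .refl

theorem structRed_snf (M : Tm Loc Ch) : ReflTransGen StructStep M M.snf := by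
  induction M with
  | push N a M ihN ihM => exact (structRed_push a ihN ihM).trans (structRed_pushNF _ a _)
  | pop a M ih => exact structRed_pop a ih
  | caseOf M i N ihM ihN => exact (structRed_caseOf i ihM ihN).trans (structRed_caseNF _ i _)
  | loop M i ih => exact structRed_loop i ih
  | _ => exact .refl

theorem StructStep.snf_eq {M N : Tm Loc Ch} (h : StructStep M N) : M.snf = N.snf := by
  induction h with
  | passage N a b M h => simp [snf, pushNF, Ne.symm h, snf_lift]
  | select i M => simp [snf, caseNF]
  | reject i j M h => simp [snf, caseNF, h]
  | prefixPop a N i M => simp [snf, caseNF, snf_lift]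
  | prefixPush P a N i M => simp [snf, caseNF_pushNF]
  | assoc P i N M => simp [snf, caseNF_caseNF]
  | _ => simp_all [snf]

theorem snf_eq_of_structRed {M N : Tm Loc Ch} (h : ReflTransGen StructStep M N) :
    M.snf = N.snf := by
  induction h with
  | refl => rfl
  | tail _ h ih => exact ih.trans h.snf_eq

@[simp]
theorem snf_snf (M : Tm Loc Ch) : M.snf.snf = M.snf :=
  (snf_eq_of_structRed (structRed_snf M)).symm

/- Substitution can create structural redexes (a choice substituted for the scrutinee of a case),
so `snf` commutes with it only after renormalising. -/
theorem snf_subst (M N : Tm Loc Ch) (k : ℕ) :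
    (M.subst k N).snf = (M.snf.subst k N.snf).snf :=
  snf_eq_of_structRed <| (structRed_subst_left (structRed_snf M) k N).trans
    (structRed_subst_right _ k (structRed_snf N))

theorem snf_subst_of_snf_eq_caseNF {W M K : Tm Loc Ch} {i : Ch} (P : Tm Loc Ch)
    (h : W.snf = M.snf.caseNF i (K.snf.lift 0)) :
    (W.subst 0 P).snf = (M.subst 0 P).snf.caseNF i K.snf :=
  calc (W.subst 0 P).snf = ((M.snf.caseNF i (K.snf.lift 0)).subst 0 P.snf).snf := by
        rw [snf_subst, h]
    _ = ((M.snf.caseOf i (K.snf.lift 0)).subst 0 P.snf).snf :=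
        (snf_eq_of_structRed (structRed_subst_left (structRed_caseNF _ i _) 0 _)).symm
    _ = (M.subst 0 P).snf.caseNF i K.snf := by
        simp only [Tm.subst, subst_lift, snf, snf_snf, ← snf_subst]

inductive ParBeta : Tm Loc Ch → Tm Loc Ch → Prop where
  | var (n : ℕ) : ParBeta (.var n) (.var n)
  | choice (i : Ch) : ParBeta (.choice i) (.choice i)
  | push {N N' : Tm Loc Ch} (a : Loc) {M M' : Tm Loc Ch} :
      ParBeta N N' → ParBeta M M' → ParBeta (.push N a M) (.push N' a M')
  | pop (a : Loc) {M M' : Tm Loc Ch} : ParBeta M M' → ParBeta (.pop a M) (.pop a M')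
  | caseOf {M M' : Tm Loc Ch} (i : Ch) {N N' : Tm Loc Ch} :
      ParBeta M M' → ParBeta N N' → ParBeta (.caseOf M i N) (.caseOf M' i N')
  | loop {M M' : Tm Loc Ch} (i : Ch) : ParBeta M M' → ParBeta (.loop M i) (.loop M' i)
  | beta {N N' : Tm Loc Ch} (a : Loc) {M M' : Tm Loc Ch} :
      ParBeta N N' → ParBeta M M' → ParBeta (.push N a (.pop a M)) (M'.subst 0 N')
  | unroll {M M' : Tm Loc Ch} (i : Ch) :
      ParBeta M M' → ParBeta (.loop M i) (.caseOf M' i (.loop M' i))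

namespace ParBeta

theorem refl (M : Tm Loc Ch) : ParBeta M M := by
  induction M with
  | var n => exact .var n
  | choice i => exact .choice i
  | push N a M ihN ihM => exact .push a ihN ihM
  | pop a M ih => exact .pop a ih
  | caseOf M i N ihM ihN => exact .caseOf i ihM ihN
  | loop M i ih => exact .loop i ih

theorem lift {M M' : Tm Loc Ch} (h : ParBeta M M') (d : ℕ) :
    ParBeta (M.lift d) (M'.lift d) := by
  induction h generalizing d with
  | var n => simp only [Tm.lift]; split_ifs <;> constructor
  | choice i => exact .choice i
  | push a _ _ ihN ihM => exact .push a (ihN d) (ihM d)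
  | pop a _ ih => exact .pop a (ih (d + 1))
  | caseOf i _ _ ihM ihN => exact .caseOf i (ihM d) (ihN d)
  | loop i _ ih => exact .loop i (ih d)
  | @beta N N' a M M' _ _ ihN ihM =>
    simp only [Tm.lift, Tm.lift_subst_of_ge M' N' (Nat.zero_le d)]
    exact .beta a (ihN d) (ihM (d + 1))
  | unroll i _ ih => exact .unroll i (ih d)

theorem subst {M M' N N' : Tm Loc Ch} (h : ParBeta M M') (k : ℕ) (hN : ParBeta N N') :
    ParBeta (M.subst k N) (M'.subst k N') := by
  induction h generalizing k N N' with
  | var n =>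
    simp only [Tm.subst]
    split_ifs
    exacts [hN, .var n, .var (n - 1)]
  | choice i => exact .choice i
  | push a _ _ ihN ihM => exact .push a (ihN k hN) (ihM k hN)
  | pop a _ ih => exact .pop a (ih (k + 1) (hN.lift 0))
  | caseOf i _ _ ihM ihN => exact .caseOf i (ihM k hN) (ihN k hN)
  | loop i _ ih => exact .loop i (ih k hN)
  | @beta A A' a B B' _ _ ihA ihB =>
    simp only [Tm.subst, Tm.subst_subst_of_le B' A' N' (Nat.zero_le k)]
    exact .beta a (ihA k hN) (ihB (k + 1) (hN.lift 0))
  | unroll i _ ih => exact .unroll i (ih k hN)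

theorem red {M N : Tm Loc Ch} (h : ParBeta M N) : ReflTransGen Step M N := by
  induction h with
  | var n => exact .refl
  | choice i => exact .refl
  | push a _ _ ihN ihM => exact red_push a ihN ihM
  | pop a _ ih => exact red_pop a ih
  | caseOf i _ _ ihM ihN => exact red_caseOf i ihM ihN
  | loop i _ ih => exact red_loop i ih
  | @beta N N' a M M' _ _ ihN ihM =>
    exact (red_push a ihN (red_pop a ihM)).tail (.beta N' a M')
  | @unroll M M' i _ ih => exact (red_loop i ih).tail (.unroll M' i)

end ParBeta

theorem Step.structStep_or_parBeta {M N : Tm Loc Ch} (h : Step M N) :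
    StructStep M N ∨ ParBeta M N := by
  induction h with
  | beta N a M => exact .inr (.beta a (.refl N) (.refl M))
  | passage N a b M h => exact .inl (.passage N a b M h)
  | select i M => exact .inl (.select i M)
  | reject i j M h => exact .inl (.reject i j M h)
  | prefixPop a N i M => exact .inl (.prefixPop a N i M)
  | prefixPush P a N i M => exact .inl (.prefixPush P a N i M)
  | assoc P i N M => exact .inl (.assoc P i N M)
  | unroll M i => exact .inr (.unroll i (.refl M))
  | push_left _ _ a M _ ih => exact ih.imp (.push_left _ _ a M) (.push a · (.refl M))
  | push_right N a _ _ _ ih => exact ih.imp (.push_right N a _ _) (.push a (.refl N))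
  | pop_body a _ _ _ ih => exact ih.imp (.pop_body a _ _) (.pop a)
  | case_left _ _ i N _ ih => exact ih.imp (.case_left _ _ i N) (.caseOf i · (.refl N))
  | case_right M i _ _ _ ih => exact ih.imp (.case_right M i _ _) (.caseOf i (.refl M))
  | loop_body _ _ i _ ih => exact ih.imp (.loop_body _ _ i) (.loop i)

namespace Tm

/- Takahashi's complete development of all beta and unroll redexes. -/
open Classical in
noncomputable def develop : Tm Loc Ch → Tm Loc Ch
  | .push N a (.pop b M) =>
    if a = b then M.develop.subst 0 N.develop else .push N.develop a (.pop b M.develop)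
  | .push N a M => .push N.develop a M.develop
  | .pop a M => .pop a M.develop
  | .caseOf M i N => .caseOf M.develop i N.develop
  | .loop M i => .caseOf M.develop i (.loop M.develop i)
  | M => M

end Tm

theorem ParBeta.develop {M N : Tm Loc Ch} (h : ParBeta M N) : ParBeta N M.develop := by
  induction h with
  | var n => exact .var n
  | choice i => exact .choice i
  | @push N N' a X X' hN hX ihN ihX =>
    cases hX with
    | pop b hM =>
      cases ihX with
      | pop _ hM' =>
        by_cases hab : a = b
        · subst hab; simp only [Tm.develop]; exact .beta a ihN hM'
        · simp only [Tm.develop, if_neg hab]; exact .push a ihN (.pop b hM')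
    | _ => simp only [Tm.develop] at ihX ⊢; exact .push a ihN ihX
  | pop a _ ih => exact .pop a ih
  | caseOf i _ _ ihM ihN => exact .caseOf i ihM ihN
  | loop i _ ih => exact .unroll i ih
  | beta a _ _ ihN ihM => simp only [Tm.develop]; exact ihM.subst 0 ihN
  | unroll i _ ih => exact .caseOf i ih (.loop i ih)

def ParBetaNF (M N : Tm Loc Ch) : Prop := ∃ W, ParBeta M W ∧ W.snf = N

theorem ParBetaNF.red {M N : Tm Loc Ch} (h : ParBetaNF M N) : ReflTransGen Step M N := by
  obtain ⟨W, hW, rfl⟩ := h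
  exact hW.red.trans (red_of_structRed (structRed_snf W))

theorem ParBeta.pushNF {N N' M M' : Tm Loc Ch} (a : Loc) (hN : ParBeta N N')
    (hM : ParBeta M M') :
    ParBetaNF (pushNF N a M) (pushNF N'.snf a M'.snf) := by
  induction M generalizing N N' M' with
  | pop b M ih =>
    by_cases hab : a = b
    · subst hab
      exact ⟨.push N' a M', by simp only [Tm.pushNF]; exact .push a hN hM, rfl⟩
    · cases hM with
      | pop _ hM =>
        obtain ⟨W, hW, hsW⟩ := ih (hN.lift 0) hM
        refine ⟨.pop b W, by simp only [Tm.pushNF, if_neg hab]; exact .pop b hW, ?_⟩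
        simp only [snf, Tm.pushNF, if_neg hab, hsW, snf_lift]
  | _ => exact ⟨.push N' a M', by simp only [Tm.pushNF]; exact .push a hN hM, rfl⟩

theorem ParBeta.caseNF {M M' N N' : Tm Loc Ch} (i : Ch) (hM : ParBeta M M')
    (hN : ParBeta N N') :
    ParBetaNF (M.caseNF i N) (M'.snf.caseNF i N'.snf) := by
  induction M generalizing M' N N' with
  | var n => exact ⟨.caseOf M' i N', by simp only [Tm.caseNF]; exact .caseOf i hM hN, rfl⟩
  | loop M j => exact ⟨.caseOf M' i N', by simp only [Tm.caseNF]; exact .caseOf i hM hN, rfl⟩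
  | choice j =>
    cases hM
    by_cases hji : j = i
    · subst hji; exact ⟨N', by simpa [Tm.caseNF] using hN, by simp [snf, Tm.caseNF]⟩
    · exact ⟨.choice j, by simp only [Tm.caseNF, if_neg hji]; exact .choice j,
        by simp [snf, Tm.caseNF, hji]⟩
  | pop b M ih =>
    cases hM with
    | pop _ hM =>
      obtain ⟨W, hW, hsW⟩ := ih hM (hN.lift 0)
      exact ⟨.pop b W, .pop b hW, by simp only [snf, Tm.caseNF, hsW, snf_lift]⟩
  | caseOf P j M _ ih =>
    by_cases hji : j = i
    · subst hji
      cases hM with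
      | caseOf _ hP hM =>
        obtain ⟨W, hW, hsW⟩ := ih hM hN
        exact ⟨.caseOf _ j W, by simp only [Tm.caseNF]; exact .caseOf j hP hW,
          by simp only [snf, hsW, caseNF_caseNF]⟩
    · exact ⟨.caseOf M' i N', by simp only [Tm.caseNF, if_neg hji]; exact .caseOf i hM hN, rfl⟩
  | push P c M _ ih =>
    cases hM with
    | push _ hP hM =>
      obtain ⟨W₀, hW₀, hsW₀⟩ := ih hM hN
      obtain ⟨W, hW, hsW⟩ := hP.pushNF c hW₀
      exact ⟨W, hW, by simp only [hsW, hsW₀, snf, caseNF_pushNF]⟩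
    | @beta _ P' _ M₀ M₀' hP hM₀ =>
      obtain ⟨W₁, hW₁, hsW₁⟩ := ih (.pop c hM₀) hN
      simp only [Tm.caseNF] at hW₁
      cases hW₁ with
      | pop _ hW₀ =>
        rename_i W₀
        have hsW₀ : W₀.snf = M₀'.snf.caseNF i (N'.snf.lift 0) := by
          simpa only [snf, Tm.caseNF, Tm.pop.injEq, true_and] using hsW₁
        exact ⟨W₀.subst 0 P', by simp only [Tm.caseNF, Tm.pushNF]; exact .beta c hP hW₀,
          snf_subst_of_snf_eq_caseNF P' hsW₀⟩

theorem ParBeta.snf {M N : Tm Loc Ch} (h : ParBeta M N) : ParBetaNF M.snf N.snf := by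
  induction h with
  | var n => exact ⟨_, .var n, rfl⟩
  | choice i => exact ⟨_, .choice i, rfl⟩
  | pop a _ ih =>
    obtain ⟨W, hW, hsW⟩ := ih
    exact ⟨.pop a W, .pop a hW, by simp only [Tm.snf, hsW]⟩
  | loop i _ ih =>
    obtain ⟨W, hW, hsW⟩ := ih
    exact ⟨.loop W i, .loop i hW, by simp only [Tm.snf, hsW]⟩
  | unroll i _ ih =>
    obtain ⟨W, hW, hsW⟩ := ih
    exact ⟨.caseOf W i (.loop W i), .unroll i hW, by simp only [Tm.snf, hsW]⟩
  | push a _ _ ihN ihM =>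
    obtain ⟨WN, hWN, hsWN⟩ := ihN
    obtain ⟨WM, hWM, hsWM⟩ := ihM
    obtain ⟨W, hW, hsW⟩ := hWN.pushNF a hWM
    exact ⟨W, hW, by simp only [hsW, hsWN, hsWM, Tm.snf]⟩
  | caseOf i _ _ ihM ihN =>
    obtain ⟨WM, hWM, hsWM⟩ := ihM
    obtain ⟨WN, hWN, hsWN⟩ := ihN
    obtain ⟨W, hW, hsW⟩ := hWM.caseNF i hWN
    exact ⟨W, hW, by simp only [hsW, hsWN, hsWM, Tm.snf]⟩
  | beta a _ _ ihN ihM =>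
    obtain ⟨WN, hWN, hsWN⟩ := ihN
    obtain ⟨WM, hWM, hsWM⟩ := ihM
    refine ⟨WM.subst 0 WN, by simp only [Tm.snf, Tm.pushNF]; exact .beta a hWN hWM, ?_⟩
    rw [snf_subst, hsWM, hsWN, ← snf_subst]

theorem ParBetaNF.diamond {M N P : Tm Loc Ch} (hN : ParBetaNF M N) (hP : ParBetaNF M P) :
    ∃ Q, ParBetaNF N Q ∧ ParBetaNF P Q := by
  obtain ⟨WN, hWN, rfl⟩ := hN
  obtain ⟨WP, hWP, rfl⟩ := hP
  exact ⟨M.develop.snf, hWN.develop.snf, hWP.develop.snf⟩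

theorem Step.parBetaNF_snf {M N : Tm Loc Ch} (h : Step M N) :
    ReflGen ParBetaNF M.snf N.snf := by
  rcases h.structStep_or_parBeta with hs | hp
  · exact hs.snf_eq ▸ .refl
  · exact .single hp.snf

/-- Confluence of reduction on FMC terms. -/
theorem fmc_confluence (M N P : Tm Loc Ch)
    (h1 : Relation.ReflTransGen Step M N) (h2 : Relation.ReflTransGen Step M P) :
    ∃ Q : Tm Loc Ch, Relation.ReflTransGen Step N Q ∧ Relation.ReflTransGen Step P Q := by
  have project {A B : Tm Loc Ch} (h : ReflTransGen Step A B) : ReflTransGen ParBetaNF A.snf B.snf :=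
    ReflTransGen.lift' snf (fun _ _ hs ↦ hs.parBetaNF_snf.to_reflTransGen) _ _ h
  have embed {A B : Tm Loc Ch} (h : ReflTransGen ParBetaNF A B) : ReflTransGen Step A B :=
    ReflTransGen.lift' id (fun _ _ hr ↦ hr.red) _ _ h
  obtain ⟨Q, hNQ, hPQ⟩ := church_rosser
    (fun _ _ _ hb hc ↦ by
      obtain ⟨Q, hbQ, hcQ⟩ := ParBetaNF.diamond hb hc
      exact ⟨Q, .single hbQ, .single hcQ⟩)
    (project h1) (project h2)
  exact ⟨Q, (red_of_structRed (structRed_snf N)).trans (embed hNQ),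
    (red_of_structRed (structRed_snf P)).trans (embed hPQ)⟩
end

section
/- Small-step and big-step operational semantics agree: for all memories S_A, T_A, every term M, and every choice i, the abstract machine has a run from state (S_A, M, ε) to the final state (T_A, i, ε) if and only if (S_A, M) ⇓ (T_A, i). -/
variable {Loc Ch : Type}

variable [DecidableEq Loc]

/-- A memory: a family of stacks of terms indexed by the locations
(stacks are lists with the head as top). -/
def Mem (Loc Ch : Type) := Loc → List (Tm Loc Ch)

/-- `S.push a N` pushes `N` onto the stack at location `a`. -/
def Mem.push (S : Mem Loc Ch) (a : Loc) (N : Tm Loc Ch) : Mem Loc Ch :=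
  Function.update S a (N :: S a)

/-- The empty memory. -/
def Mem.empty : Mem Loc Ch := fun _ => []

/-- A continuation stack: a stack of conditional continuations `(i -> M)`. -/
abbrev CStack (Loc Ch : Type) := List (Ch × Tm Loc Ch)

/-- The transitions of the abstract machine on states `(S, M, K)`. -/
inductive MStep : Mem Loc Ch × Tm Loc Ch × CStack Loc Ch → Mem Loc Ch × Tm Loc Ch × CStack Loc Ch → Prop where
  | push (S : Mem Loc Ch) (N : Tm Loc Ch) (a : Loc) (M : Tm Loc Ch) (K : CStack Loc Ch) :
      MStep (S, .push N a M, K) (S.push a N, M, K)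
  | pop (S : Mem Loc Ch) (a : Loc) (N M : Tm Loc Ch) (K : CStack Loc Ch) :
      MStep (S.push a N, .pop a M, K) (S, M.subst 0 N, K)
  | select (S : Mem Loc Ch) (i : Ch) (M : Tm Loc Ch) (K : CStack Loc Ch) :
      MStep (S, .choice i, (i, M) :: K) (S, M, K)
  | reject (S : Mem Loc Ch) (i j : Ch) (M : Tm Loc Ch) (K : CStack Loc Ch) (h : i ≠ j) :
      MStep (S, .choice i, (j, M) :: K) (S, .choice i, K)
  | caseOf (S : Mem Loc Ch) (N : Tm Loc Ch) (i : Ch) (M : Tm Loc Ch) (K : CStack Loc Ch) :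
      MStep (S, .caseOf N i M, K) (S, N, (i, M) :: K)
  | loop (S : Mem Loc Ch) (M : Tm Loc Ch) (i : Ch) (K : CStack Loc Ch) :
      MStep (S, .loop M i, K) (S, M, (i, .loop M i) :: K)

/-- Big-step evaluation `(S, M) ⇓ (T, i)`. -/
inductive Eval : Mem Loc Ch → Tm Loc Ch → Mem Loc Ch → Ch → Prop where
  | choice (S : Mem Loc Ch) (i : Ch) : Eval S (.choice i) S i
  | push (S : Mem Loc Ch) (N : Tm Loc Ch) (a : Loc) (M : Tm Loc Ch) (T : Mem Loc Ch) (i : Ch) :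
      Eval (S.push a N) M T i → Eval S (.push N a M) T i
  | pop (S : Mem Loc Ch) (a : Loc) (N M : Tm Loc Ch) (T : Mem Loc Ch) (i : Ch) :
      Eval S (M.subst 0 N) T i → Eval (S.push a N) (.pop a M) T i
  | case_eq (R S T : Mem Loc Ch) (M N : Tm Loc Ch) (i j : Ch) :
      Eval R M S i → Eval S N T j → Eval R (.caseOf M i N) T j
  | case_ne (R T : Mem Loc Ch) (M N : Tm Loc Ch) (i j : Ch) (h : i ≠ j) :
      Eval R M T i → Eval R (.caseOf M j N) T i
  | loop_eq (R S T : Mem Loc Ch) (M : Tm Loc Ch) (i j : Ch) :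
      Eval R M S i → Eval S (.loop M i) T j → Eval R (.loop M i) T j
  | loop_ne (R T : Mem Loc Ch) (M : Tm Loc Ch) (i j : Ch) (h : i ≠ j) :
      Eval R M T i → Eval R (.loop M j) T i

/-- Big-step evaluation pushed along a continuation stack, stated for the
terminal choice: `EvalCont S j K T i` means that starting from memory `S` with
current choice `j`, consuming the continuation stack `K` ends in `(T, i)`. -/
inductive EvalCont : Mem Loc Ch → Ch → CStack Loc Ch → Mem Loc Ch → Ch → Prop where
  | nil (S : Mem Loc Ch) (i : Ch) : EvalCont S i [] S i
  | eq (S S' T : Mem Loc Ch) (M : Tm Loc Ch) (j j' i : Ch) (K : CStack Loc Ch) :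
      Eval S M S' j' → EvalCont S' j' K T i → EvalCont S j ((j, M) :: K) T i
  | ne (S T : Mem Loc Ch) (M : Tm Loc Ch) (j k i : Ch) (K : CStack Loc Ch) :
      j ≠ k → EvalCont S j K T i → EvalCont S j ((k, M) :: K) T i

/-- Evaluation of a term together with a continuation stack. -/
def EvalK (S : Mem Loc Ch) (M : Tm Loc Ch) (K : CStack Loc Ch)
    (T : Mem Loc Ch) (i : Ch) : Prop :=
  ∃ S' j, Eval S M S' j ∧ EvalCont S' j K T i

lemma eval_choice_inv {S S' : Mem Loc Ch} {j j' : Ch}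
    (h : Eval S (Tm.choice j) S' j') : S' = S ∧ j' = j := by
  cases h; exact ⟨rfl, rfl⟩

lemma step_evalK {s t : Mem Loc Ch × Tm Loc Ch × CStack Loc Ch}
    (hst : MStep s t) {T : Mem Loc Ch} {i : Ch}
    (h : EvalK t.1 t.2.1 t.2.2 T i) : EvalK s.1 s.2.1 s.2.2 T i := by
  cases hst with
  | push S N a M K =>
      obtain ⟨S', j, he, hc⟩ := h
      exact ⟨S', j, Eval.push _ _ _ _ _ _ he, hc⟩
  | pop S a N M K =>
      obtain ⟨S', j, he, hc⟩ := h
      exact ⟨S', j, Eval.pop _ _ _ _ _ _ he, hc⟩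
  | select S j M K =>
      obtain ⟨S', j', he, hc⟩ := h
      exact ⟨S, j, Eval.choice S j, EvalCont.eq _ _ _ _ _ _ _ _ he hc⟩
  | reject S j k M K hjk =>
      obtain ⟨S', j', he, hc⟩ := h
      obtain ⟨rfl, rfl⟩ := eval_choice_inv he
      exact ⟨S', j', he, EvalCont.ne _ _ _ _ _ _ _ hjk hc⟩
  | caseOf S N j M K =>
      obtain ⟨S', j', he, hc⟩ := h
      cases hc with
      | eq _ S'' _ _ _ j'' _ _ he2 hc2 =>
          exact ⟨S'', j'', Eval.case_eq _ _ _ _ _ _ _ he he2, hc2⟩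
      | ne _ _ _ _ _ _ _ hne hc2 =>
          exact ⟨S', j', Eval.case_ne _ _ _ _ _ _ hne he, hc2⟩
  | loop S M j K =>
      obtain ⟨S', j', he, hc⟩ := h
      cases hc with
      | eq _ S'' _ _ _ j'' _ _ he2 hc2 =>
          exact ⟨S'', j'', Eval.loop_eq _ _ _ _ _ _ he he2, hc2⟩
      | ne _ _ _ _ _ _ _ hne hc2 =>
          exact ⟨S', j', Eval.loop_ne _ _ _ _ _ hne he, hc2⟩

lemma eval_run {S T : Mem Loc Ch} {M : Tm Loc Ch} {i : Ch}
    (h : Eval S M T i) (K : CStack Loc Ch) :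
    Relation.ReflTransGen MStep (S, M, K) (T, Tm.choice i, K) := by
  induction h generalizing K with
  | choice S i => exact Relation.ReflTransGen.refl
  | push S N a M T i _ ih =>
      exact Relation.ReflTransGen.head (MStep.push S N a M K) (ih K)
  | pop S a N M T i _ ih =>
      exact Relation.ReflTransGen.head (MStep.pop S a N M K) (ih K)
  | case_eq R S T M N j k _ _ ih1 ih2 =>
      refine Relation.ReflTransGen.head (MStep.caseOf R M j N K) ?_
      exact ((ih1 _).trans (Relation.ReflTransGen.head (MStep.select S j N K) (ih2 K)))
  | case_ne R T M N j k h _ ih =>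
      refine Relation.ReflTransGen.head (MStep.caseOf R M k N K) ?_
      exact (ih _).trans (Relation.ReflTransGen.head (MStep.reject T j k N K h)
        Relation.ReflTransGen.refl)
  | loop_eq R S T M j k _ _ ih1 ih2 =>
      refine Relation.ReflTransGen.head (MStep.loop R M j K) ?_
      exact ((ih1 _).trans (Relation.ReflTransGen.head (MStep.select S j _ K) (ih2 K)))
  | loop_ne R T M j k h _ ih =>
      refine Relation.ReflTransGen.head (MStep.loop R M k K) ?_
      exact (ih _).trans (Relation.ReflTransGen.head (MStep.reject T j k _ K h)
        Relation.ReflTransGen.refl)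

/-- Small-step and big-step operational semantics agree. -/
theorem machine_bigstep_agreement (S T : Mem Loc Ch) (M : Tm Loc Ch) (i : Ch) :
    Relation.ReflTransGen MStep (S, M, ([] : CStack Loc Ch)) (T, Tm.choice i, ([] : CStack Loc Ch)) ↔
      Eval S M T i := by
  constructor
  · intro h
    have key : ∀ s t : Mem Loc Ch × Tm Loc Ch × CStack Loc Ch,
        Relation.ReflTransGen MStep s t → EvalK t.1 t.2.1 t.2.2 T i →
        EvalK s.1 s.2.1 s.2.2 T i := by
      intro s t hst
      induction hst using Relation.ReflTransGen.head_induction_on with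
      | refl => exact id
      | head h1 _ ih => exact fun hk => step_evalK h1 (ih hk)
    have := key _ _ h ⟨T, i, Eval.choice T i, EvalCont.nil T i⟩
    obtain ⟨S', j, he, hc⟩ := this
    cases hc
    exact he
  · intro h
    exact eval_run h []
end
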